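/- arXiv:1002.2735 — 4 statements merged into one kernel-verified Lean document; each statement's English description precedes it below -/
import Mathlib

section
/- The Poisson bracket of H₀ with H₂ vanishes, i.e., H₂ = ½ p_ψ² + F(ψ) is a first integral of the Hamiltonian H₀ = ½(p_r² + p_ψ²/r² + p_z²) + F(ψ)/r². -/
open Real

/- Phase space coordinates: `x 0 = r`, `x 1 = ψ`, `x 2 = z`,
   `x 3 = p_r`, `x 4 = p_ψ`, `x 5 = p_z`. -/

/-- Partial derivative with respect to the `i`-th coordinate. -/
noncomputable def pderiv6 (i : Fin 6) (f : (Fin 6 → ℝ) → ℝ) (x : Fin 6 → ℝ) : ℝ :=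
  deriv (fun t => f (Function.update x i t)) (x i)

/-- Standard Poisson bracket on phase space with positions `(r,ψ,z)` and
momenta `(p_r,p_ψ,p_z)`. -/
noncomputable def poisson6 (f g : (Fin 6 → ℝ) → ℝ) (x : Fin 6 → ℝ) : ℝ :=
  (pderiv6 0 f x * pderiv6 3 g x - pderiv6 3 f x * pderiv6 0 g x) +
  (pderiv6 1 f x * pderiv6 4 g x - pderiv6 4 f x * pderiv6 1 g x) +
  (pderiv6 2 f x * pderiv6 5 g x - pderiv6 5 f x * pderiv6 2 g x)

/-- The Hamiltonian `H₀ = ½(p_r² + p_ψ²/r² + p_z²) + F(ψ)/r²`. -/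
noncomputable def H₀ (F : ℝ → ℝ) (x : Fin 6 → ℝ) : ℝ :=
  (1/2) * ((x 3)^2 + (x 4)^2 / (x 0)^2 + (x 5)^2) + F (x 1) / (x 0)^2

/-- `H₂ = ½ p_ψ² + F(ψ)`. -/
noncomputable def H₂ (F : ℝ → ℝ) (x : Fin 6 → ℝ) : ℝ :=
  (1/2) * (x 4)^2 + F (x 1)

/-- `H₂` is a first integral of `H₀`: the Poisson bracket `{H₀, H₂}` vanishes. -/
theorem poisson_H0_H2 (F : ℝ → ℝ) (hF : ContDiff ℝ (⊤ : ℕ∞) F)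
    (x : Fin 6 → ℝ) (hr : 0 < x 0) :
    poisson6 (H₀ F) (H₂ F) x = 0 := by
  have hFd : Differentiable ℝ F := hF.differentiable (by simp)
  have upd : ∀ (i j : Fin 6) (t : ℝ), i ≠ j → Function.update x i t j = x j := by
    intro i j t h; exact Function.update_of_ne h.symm t x
  -- derivatives of H₂
  have h2_0 : pderiv6 0 (H₂ F) x = 0 := by
    unfold pderiv6 H₂
    simp only [upd 0 4 _ (by decide), upd 0 1 _ (by decide)]
    exact deriv_const _ _
  have h2_3 : pderiv6 3 (H₂ F) x = 0 := by
    unfold pderiv6 H₂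
    simp only [upd 3 4 _ (by decide), upd 3 1 _ (by decide)]
    exact deriv_const _ _
  have h2_2 : pderiv6 2 (H₂ F) x = 0 := by
    unfold pderiv6 H₂
    simp only [upd 2 4 _ (by decide), upd 2 1 _ (by decide)]
    exact deriv_const _ _
  have h2_5 : pderiv6 5 (H₂ F) x = 0 := by
    unfold pderiv6 H₂
    simp only [upd 5 4 _ (by decide), upd 5 1 _ (by decide)]
    exact deriv_const _ _
  have h2_1 : pderiv6 1 (H₂ F) x = deriv F (x 1) := by
    unfold pderiv6 H₂
    simp only [upd 1 4 _ (by decide), Function.update_self]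
    rw [deriv_const_add]
  have h2_4 : pderiv6 4 (H₂ F) x = x 4 := by
    unfold pderiv6 H₂
    simp only [upd 4 1 _ (by decide), Function.update_self]
    rw [deriv_add_const, deriv_const_mul _ (differentiable_pow 2).differentiableAt]
    simp
  have h0_1 : pderiv6 1 (H₀ F) x = deriv F (x 1) / (x 0)^2 := by
    unfold pderiv6 H₀
    simp only [upd 1 0 _ (by decide), upd 1 3 _ (by decide), upd 1 4 _ (by decide),
      upd 1 5 _ (by decide), Function.update_self]
    rw [deriv_const_add]
    have : (fun t => F t / (x 0)^2) = fun t => F t * ((x 0)^2)⁻¹ := by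
      funext t; rw [div_eq_mul_inv]
    rw [this, deriv_mul_const (hFd _), div_eq_mul_inv]
  have h0_4 : pderiv6 4 (H₀ F) x = x 4 / (x 0)^2 := by
    unfold pderiv6 H₀
    simp only [upd 4 0 _ (by decide), upd 4 3 _ (by decide), upd 4 1 _ (by decide),
      upd 4 5 _ (by decide), Function.update_self]
    rw [deriv_add_const]
    have : (fun t : ℝ => (1:ℝ)/2 * ((x 3)^2 + t^2 / (x 0)^2 + (x 5)^2))
        = fun t : ℝ => (1/(2*(x 0)^2)) * t^2 + ((1:ℝ)/2*((x 3)^2 + (x 5)^2)) := by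
      funext t; field_simp; ring
    rw [this, deriv_add_const, deriv_const_mul _ (differentiable_pow 2).differentiableAt]
    simp; field_simp
  unfold poisson6
  rw [h2_0, h2_3, h2_2, h2_5, h2_1, h2_4, h0_1, h0_4]
  ring
end

section
/- The function H₃ = ½[(r p_z − z p_r)² + (1 + z²/r²) p_ψ²] + (1 + z²/r²) F(ψ) is a first integral of the Hamiltonian H₀ = ½(p_r² + p_ψ²/r² + p_z²) + F(ψ)/r², i.e., {H₀, H₃} = 0. -/
open Real

/-- `H₃ = ½[(r p_z − z p_r)² + (1 + z²/r²) p_ψ²] + (1 + z²/r²) F(ψ)`. -/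
noncomputable def H₃ (F : ℝ → ℝ) (x : Fin 6 → ℝ) : ℝ :=
  (1/2) * ((x 0 * x 5 - x 2 * x 3)^2 + (1 + (x 2)^2 / (x 0)^2) * (x 4)^2) +
    (1 + (x 2)^2 / (x 0)^2) * F (x 1)

/-- `H₃` is a first integral of `H₀`: the Poisson bracket `{H₀, H₃}` vanishes. -/
theorem poisson_H0_H3 (F : ℝ → ℝ) (hF : ContDiff ℝ (⊤ : ℕ∞) F)
    (x : Fin 6 → ℝ) (hr : 0 < x 0) :
    poisson6 (H₀ F) (H₃ F) x = 0 := by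
  have hne : x 0 ≠ 0 := hr.ne'
  have hne2 : (x 0)^2 ≠ 0 := pow_ne_zero 2 hne
  have hFd : HasDerivAt F (deriv F (x 1)) (x 1) :=
    ((hF.differentiable (by simp)) (x 1)).hasDerivAt
  -- derivatives of H₀
  have h00 : pderiv6 0 (H₀ F) x = -(x 4)^2/(x 0)^3 - 2*F (x 1)/(x 0)^3 := by
    unfold pderiv6 H₀
    simp only [Function.update_apply, Fin.isValue, show ((3:Fin 6) = 0) = False by simp,
      show ((4:Fin 6) = 0) = False by simp, show ((5:Fin 6) = 0) = False by simp,
      show ((1:Fin 6) = 0) = False by simp, if_false, if_true, eq_self_iff_true]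
    have hq : HasDerivAt (fun t : ℝ => (x 4)^2 / t^2)
        ((0 * (x 0)^2 - (x 4)^2 * (2 * (x 0)^(2-1))) / ((x 0)^2)^2) (x 0) := by
      simpa [Pi.div_def] using (hasDerivAt_const (x 0) ((x 4)^2)).div (hasDerivAt_pow 2 (x 0)) hne2
    have hq2 : HasDerivAt (fun t : ℝ => F (x 1) / t^2)
        ((0 * (x 0)^2 - F (x 1) * (2 * (x 0)^(2-1))) / ((x 0)^2)^2) (x 0) := by
      simpa [Pi.div_def] using (hasDerivAt_const (x 0) (F (x 1))).div (hasDerivAt_pow 2 (x 0)) hne2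
    have h := (((hq.const_add ((x 3)^2)).add_const ((x 5)^2)).const_mul (1/2)).add hq2
    erw [h.deriv]; push_cast; field_simp; ring
  have h01 : pderiv6 1 (H₀ F) x = deriv F (x 1) / (x 0)^2 := by
    unfold pderiv6 H₀
    simp only [Function.update_apply, Fin.isValue, show ((3:Fin 6) = 1) = False by simp,
      show ((4:Fin 6) = 1) = False by simp, show ((5:Fin 6) = 1) = False by simp,
      show ((0:Fin 6) = 1) = False by simp, if_false, if_true, eq_self_iff_true]
    have h := ((hFd.div_const ((x 0)^2)).const_add
      ((1/2) * ((x 3)^2 + (x 4)^2 / (x 0)^2 + (x 5)^2)))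
    rw [h.deriv]
  have h02 : pderiv6 2 (H₀ F) x = 0 := by
    unfold pderiv6 H₀
    simp only [Function.update_apply, Fin.isValue, show ((3:Fin 6) = 2) = False by simp,
      show ((4:Fin 6) = 2) = False by simp, show ((5:Fin 6) = 2) = False by simp,
      show ((0:Fin 6) = 2) = False by simp, show ((1:Fin 6) = 2) = False by simp,
      if_false, if_true, eq_self_iff_true]
    exact deriv_const _ _
  have h03 : pderiv6 3 (H₀ F) x = x 3 := by
    unfold pderiv6 H₀
    simp only [Function.update_apply, Fin.isValue, show ((4:Fin 6) = 3) = False by simp,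
      show ((5:Fin 6) = 3) = False by simp, show ((0:Fin 6) = 3) = False by simp,
      show ((1:Fin 6) = 3) = False by simp, if_false, if_true, eq_self_iff_true]
    have h := ((((hasDerivAt_pow 2 (x 3)).add_const ((x 4)^2 / (x 0)^2)).add_const
      ((x 5)^2)).const_mul (1/2)).add_const (F (x 1) / (x 0)^2)
    rw [h.deriv]; push_cast; ring
  have h04 : pderiv6 4 (H₀ F) x = x 4 / (x 0)^2 := by
    unfold pderiv6 H₀
    simp only [Function.update_apply, Fin.isValue, show ((3:Fin 6) = 4) = False by simp,
      show ((5:Fin 6) = 4) = False by simp, show ((0:Fin 6) = 4) = False by simp,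
      show ((1:Fin 6) = 4) = False by simp, if_false, if_true, eq_self_iff_true]
    have h := (((((hasDerivAt_pow 2 (x 4)).div_const ((x 0)^2)).const_add ((x 3)^2)).add_const
      ((x 5)^2)).const_mul (1/2)).add_const (F (x 1) / (x 0)^2)
    rw [h.deriv]; push_cast; field_simp
  have h05 : pderiv6 5 (H₀ F) x = x 5 := by
    unfold pderiv6 H₀
    simp only [Function.update_apply, Fin.isValue, show ((3:Fin 6) = 5) = False by simp,
      show ((4:Fin 6) = 5) = False by simp, show ((0:Fin 6) = 5) = False by simp,
      show ((1:Fin 6) = 5) = False by simp, if_false, if_true, eq_self_iff_true]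
    have h := (((hasDerivAt_pow 2 (x 5)).const_add ((x 3)^2 + (x 4)^2 / (x 0)^2)).const_mul
      (1/2)).add_const (F (x 1) / (x 0)^2)
    rw [h.deriv]; push_cast; ring
  -- derivatives of H₃
  have hA : HasDerivAt (fun t : ℝ => 1 + (x 2)^2 / t^2)
      ((0 * (x 0)^2 - (x 2)^2 * (2 * (x 0)^(2-1))) / ((x 0)^2)^2) (x 0) := by
    simpa using ((hasDerivAt_const (x 0) ((x 2)^2)).div (hasDerivAt_pow 2 (x 0)) hne2).const_add 1
  have h30 : pderiv6 0 (H₃ F) x = (x 0 * x 5 - x 2 * x 3) * x 5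
      - (x 2)^2 * (x 4)^2 / (x 0)^3 - 2 * (x 2)^2 * F (x 1) / (x 0)^3 := by
    unfold pderiv6 H₃
    simp only [Function.update_apply, Fin.isValue, show ((3:Fin 6) = 0) = False by simp,
      show ((4:Fin 6) = 0) = False by simp, show ((5:Fin 6) = 0) = False by simp,
      show ((1:Fin 6) = 0) = False by simp, show ((2:Fin 6) = 0) = False by simp,
      if_false, if_true, eq_self_iff_true]
    have hL : HasDerivAt (fun t : ℝ => (t * x 5 - x 2 * x 3)^2)
        (2 * (x 0 * x 5 - x 2 * x 3)^(2-1) * (x 5)) (x 0) := by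
      have := ((hasDerivAt_mul_const (x := x 0) (x 5)).sub_const (x 2 * x 3)).pow 2
      simpa [Pi.pow_def] using this
    have h := (((hL.add (hA.mul_const ((x 4)^2))).const_mul (1/2)).add (hA.mul_const (F (x 1))))
    erw [h.deriv]; push_cast; field_simp; ring
  have h31 : pderiv6 1 (H₃ F) x = (1 + (x 2)^2 / (x 0)^2) * deriv F (x 1) := by
    unfold pderiv6 H₃
    simp only [Function.update_apply, Fin.isValue, show ((3:Fin 6) = 1) = False by simp,
      show ((4:Fin 6) = 1) = False by simp, show ((5:Fin 6) = 1) = False by simp,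
      show ((0:Fin 6) = 1) = False by simp, show ((2:Fin 6) = 1) = False by simp,
      if_false, if_true, eq_self_iff_true]
    have h := ((hFd.const_mul (1 + (x 2)^2 / (x 0)^2)).const_add
      ((1/2) * ((x 0 * x 5 - x 2 * x 3)^2 + (1 + (x 2)^2 / (x 0)^2) * (x 4)^2)))
    rw [h.deriv]
  have h32 : pderiv6 2 (H₃ F) x = -(x 0 * x 5 - x 2 * x 3) * x 3
      + x 2 * (x 4)^2 / (x 0)^2 + 2 * x 2 * F (x 1) / (x 0)^2 := by
    unfold pderiv6 H₃
    simp only [Function.update_apply, Fin.isValue, show ((3:Fin 6) = 2) = False by simp,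
      show ((4:Fin 6) = 2) = False by simp, show ((5:Fin 6) = 2) = False by simp,
      show ((0:Fin 6) = 2) = False by simp, show ((1:Fin 6) = 2) = False by simp,
      if_false, if_true, eq_self_iff_true]
    have hL : HasDerivAt (fun t : ℝ => (x 0 * x 5 - t * x 3)^2)
        (2 * (x 0 * x 5 - x 2 * x 3)^(2-1) * (-(x 3))) (x 2) := by
      have := ((hasDerivAt_mul_const (x := x 2) (x 3)).const_sub (x 0 * x 5)).pow 2
      simpa [Pi.pow_def] using this
    have hA2 : HasDerivAt (fun t : ℝ => 1 + t^2 / (x 0)^2)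
        ((2 * (x 2)^(2-1)) / (x 0)^2) (x 2) :=
      ((hasDerivAt_pow 2 (x 2)).div_const ((x 0)^2)).const_add 1
    have h := (((hL.add (hA2.mul_const ((x 4)^2))).const_mul (1/2)).add (hA2.mul_const (F (x 1))))
    erw [h.deriv]; push_cast; field_simp
  have h33 : pderiv6 3 (H₃ F) x = -(x 0 * x 5 - x 2 * x 3) * x 2 := by
    unfold pderiv6 H₃
    simp only [Function.update_apply, Fin.isValue, show ((4:Fin 6) = 3) = False by simp,
      show ((5:Fin 6) = 3) = False by simp, show ((0:Fin 6) = 3) = False by simp,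
      show ((1:Fin 6) = 3) = False by simp, show ((2:Fin 6) = 3) = False by simp,
      if_false, if_true, eq_self_iff_true]
    have hL : HasDerivAt (fun t : ℝ => (x 0 * x 5 - x 2 * t)^2)
        (2 * (x 0 * x 5 - x 2 * x 3)^(2-1) * (-(x 2))) (x 3) := by
      have := (((hasDerivAt_id (x 3)).const_mul (x 2)).const_sub (x 0 * x 5)).pow 2
      simpa [Pi.pow_def] using this
    have h := ((hL.add_const ((1 + (x 2)^2 / (x 0)^2) * (x 4)^2)).const_mul (1/2)).add_const
      ((1 + (x 2)^2 / (x 0)^2) * F (x 1))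
    rw [h.deriv]; push_cast; ring
  have h34 : pderiv6 4 (H₃ F) x = (1 + (x 2)^2 / (x 0)^2) * x 4 := by
    unfold pderiv6 H₃
    simp only [Function.update_apply, Fin.isValue, show ((3:Fin 6) = 4) = False by simp,
      show ((5:Fin 6) = 4) = False by simp, show ((0:Fin 6) = 4) = False by simp,
      show ((1:Fin 6) = 4) = False by simp, show ((2:Fin 6) = 4) = False by simp,
      if_false, if_true, eq_self_iff_true]
    have h := ((((hasDerivAt_pow 2 (x 4)).const_mul (1 + (x 2)^2 / (x 0)^2)).const_add
      ((x 0 * x 5 - x 2 * x 3)^2)).const_mul (1/2)).add_const ((1 + (x 2)^2 / (x 0)^2) * F (x 1))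
    rw [h.deriv]; push_cast; ring
  have h35 : pderiv6 5 (H₃ F) x = (x 0 * x 5 - x 2 * x 3) * x 0 := by
    unfold pderiv6 H₃
    simp only [Function.update_apply, Fin.isValue, show ((3:Fin 6) = 5) = False by simp,
      show ((4:Fin 6) = 5) = False by simp, show ((0:Fin 6) = 5) = False by simp,
      show ((1:Fin 6) = 5) = False by simp, show ((2:Fin 6) = 5) = False by simp,
      if_false, if_true, eq_self_iff_true]
    have hL : HasDerivAt (fun t : ℝ => (x 0 * t - x 2 * x 3)^2)
        (2 * (x 0 * x 5 - x 2 * x 3)^(2-1) * (x 0)) (x 5) := by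
      have := (((hasDerivAt_id (x 5)).const_mul (x 0)).sub_const (x 2 * x 3)).pow 2
      simpa [Pi.pow_def] using this
    have h := ((hL.add_const ((1 + (x 2)^2 / (x 0)^2) * (x 4)^2)).const_mul (1/2)).add_const
      ((1 + (x 2)^2 / (x 0)^2) * F (x 1))
    rw [h.deriv]; push_cast; ring
  unfold poisson6
  rw [h00, h01, h02, h03, h04, h05, h30, h31, h32, h33, h34, h35]
  field_simp
  ring
end

section
/- The function H₄ = ½(z p_r² + (z/r²) p_ψ² − r p_r p_z) + (z/r²) F(ψ) is a first integral of H₀ = ½(p_r² + p_ψ²/r² + p_z²) + F(ψ)/r², i.e., {H₀, H₄} = 0. -/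
open Real

/-- `H₄ = ½(z p_r² + (z/r²) p_ψ² − r p_r p_z) + (z/r²) F(ψ)`. -/
noncomputable def H₄ (F : ℝ → ℝ) (x : Fin 6 → ℝ) : ℝ :=
  (1/2) * (x 2 * (x 3)^2 + (x 2 / (x 0)^2) * (x 4)^2 - x 0 * x 3 * x 5) +
    (x 2 / (x 0)^2) * F (x 1)

lemma hd_invsq (a r : ℝ) (hr : r ≠ 0) : HasDerivAt (fun t : ℝ => a / t^2) (-2*a/r^3) r := by
  have h := (hasDerivAt_const r a).div (hasDerivAt_pow 2 r) (pow_ne_zero 2 hr)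
  refine h.congr_deriv ?_
  field_simp
  ring

lemma hd_sq (a r : ℝ) : HasDerivAt (fun t : ℝ => a * t^2) (2*a*r) r := by
  have h := (hasDerivAt_pow 2 r).const_mul a
  refine h.congr_deriv ?_
  push_cast
  ring

lemma hd_lin (a r : ℝ) : HasDerivAt (fun t : ℝ => a * t) a r := by
  simpa using (hasDerivAt_id r).const_mul a

/-- `H₄` is a first integral of `H₀`: the Poisson bracket `{H₀, H₄}` vanishes. -/
theorem poisson_H0_H4 (F : ℝ → ℝ) (hF : ContDiff ℝ (⊤ : ℕ∞) F)
    (x : Fin 6 → ℝ) (hr : 0 < x 0) :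
    poisson6 (H₀ F) (H₄ F) x = 0 := by
  have hr0 : x 0 ≠ 0 := ne_of_gt hr
  have hFd : HasDerivAt F (deriv F (x 1)) (x 1) :=
    ((hF.differentiable (by simp)) (x 1)).hasDerivAt
  have p0H0 : pderiv6 0 (H₀ F) x = -(x 4)^2/(x 0)^3 - 2*F (x 1)/(x 0)^3 := by
    unfold pderiv6 H₀
    simp only [Function.update_self,
      Function.update_of_ne (show (1:Fin 6) ≠ 0 by decide),
      Function.update_of_ne (show (3:Fin 6) ≠ 0 by decide),
      Function.update_of_ne (show (4:Fin 6) ≠ 0 by decide),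
      Function.update_of_ne (show (5:Fin 6) ≠ 0 by decide)]
    erw [HasDerivAt.deriv
      ((((hasDerivAt_const (x 0) ((x 3)^2)).add (hd_invsq ((x 4)^2) (x 0) hr0)).add
        (hasDerivAt_const (x 0) ((x 5)^2))).const_mul (1/2) |>.add
        (hd_invsq (F (x 1)) (x 0) hr0))]
    field_simp
    ring
  have p0H4 : pderiv6 0 (H₄ F) x
      = -(x 2)*(x 4)^2/(x 0)^3 - (1/2)*(x 3)*(x 5) - 2*(x 2)*F (x 1)/(x 0)^3 := by
    unfold pderiv6 H₄
    simp only [Function.update_self,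
      Function.update_of_ne (show (1:Fin 6) ≠ 0 by decide),
      Function.update_of_ne (show (2:Fin 6) ≠ 0 by decide),
      Function.update_of_ne (show (3:Fin 6) ≠ 0 by decide),
      Function.update_of_ne (show (4:Fin 6) ≠ 0 by decide),
      Function.update_of_ne (show (5:Fin 6) ≠ 0 by decide)]
    erw [HasDerivAt.deriv
      ((((hasDerivAt_const (x 0) (x 2 * (x 3)^2)).add
          ((hd_invsq (x 2) (x 0) hr0).mul_const ((x 4)^2))).sub
          (((hasDerivAt_id' (x 0)).mul_const (x 3)).mul_const (x 5))).const_mul (1/2) |>.add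
        ((hd_invsq (x 2) (x 0) hr0).mul_const (F (x 1))))]
    field_simp
    ring
  have p1H0 : pderiv6 1 (H₀ F) x = deriv F (x 1) / (x 0)^2 := by
    unfold pderiv6 H₀
    simp only [Function.update_self,
      Function.update_of_ne (show (0:Fin 6) ≠ 1 by decide),
      Function.update_of_ne (show (3:Fin 6) ≠ 1 by decide),
      Function.update_of_ne (show (4:Fin 6) ≠ 1 by decide),
      Function.update_of_ne (show (5:Fin 6) ≠ 1 by decide)]
    erw [HasDerivAt.deriv ((hasDerivAt_const (x 1) _).add (hFd.div_const ((x 0)^2)))]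
    ring
  have p1H4 : pderiv6 1 (H₄ F) x = (x 2 / (x 0)^2) * deriv F (x 1) := by
    unfold pderiv6 H₄
    simp only [Function.update_self,
      Function.update_of_ne (show (0:Fin 6) ≠ 1 by decide),
      Function.update_of_ne (show (2:Fin 6) ≠ 1 by decide),
      Function.update_of_ne (show (3:Fin 6) ≠ 1 by decide),
      Function.update_of_ne (show (4:Fin 6) ≠ 1 by decide),
      Function.update_of_ne (show (5:Fin 6) ≠ 1 by decide)]
    erw [HasDerivAt.deriv ((hasDerivAt_const (x 1) _).add
      (hFd.const_mul (x 2 / (x 0)^2)))]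
    ring
  have p2H0 : pderiv6 2 (H₀ F) x = 0 := by
    unfold pderiv6 H₀
    simp only [Function.update_self,
      Function.update_of_ne (show (0:Fin 6) ≠ 2 by decide),
      Function.update_of_ne (show (1:Fin 6) ≠ 2 by decide),
      Function.update_of_ne (show (3:Fin 6) ≠ 2 by decide),
      Function.update_of_ne (show (4:Fin 6) ≠ 2 by decide),
      Function.update_of_ne (show (5:Fin 6) ≠ 2 by decide)]
    exact deriv_const _ _
  have p2H4 : pderiv6 2 (H₄ F) x
      = (1/2)*(x 3)^2 + (1/2)*(x 4)^2/(x 0)^2 + F (x 1)/(x 0)^2 := by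
    unfold pderiv6 H₄
    simp only [Function.update_self,
      Function.update_of_ne (show (0:Fin 6) ≠ 2 by decide),
      Function.update_of_ne (show (1:Fin 6) ≠ 2 by decide),
      Function.update_of_ne (show (3:Fin 6) ≠ 2 by decide),
      Function.update_of_ne (show (4:Fin 6) ≠ 2 by decide),
      Function.update_of_ne (show (5:Fin 6) ≠ 2 by decide)]
    erw [HasDerivAt.deriv
      ((((( hasDerivAt_id' (x 2)).mul_const ((x 3)^2)).add
          (((hasDerivAt_id' (x 2)).div_const ((x 0)^2)).mul_const ((x 4)^2))).sub
          (hasDerivAt_const (x 2) (x 0 * x 3 * x 5))).const_mul (1/2) |>.add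
        (((hasDerivAt_id' (x 2)).div_const ((x 0)^2)).mul_const (F (x 1))))]
    field_simp
    ring
  have p3H0 : pderiv6 3 (H₀ F) x = x 3 := by
    unfold pderiv6 H₀
    simp only [Function.update_self,
      Function.update_of_ne (show (0:Fin 6) ≠ 3 by decide),
      Function.update_of_ne (show (1:Fin 6) ≠ 3 by decide),
      Function.update_of_ne (show (4:Fin 6) ≠ 3 by decide),
      Function.update_of_ne (show (5:Fin 6) ≠ 3 by decide)]
    erw [HasDerivAt.deriv
      ((((hasDerivAt_pow 2 (x 3)).add_const _).add_const _).const_mul (1/2) |>.add_const _)]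
    push_cast
    ring
  have p3H4 : pderiv6 3 (H₄ F) x = x 2 * x 3 - (1/2)*(x 0)*(x 5) := by
    unfold pderiv6 H₄
    simp only [Function.update_self,
      Function.update_of_ne (show (0:Fin 6) ≠ 3 by decide),
      Function.update_of_ne (show (1:Fin 6) ≠ 3 by decide),
      Function.update_of_ne (show (2:Fin 6) ≠ 3 by decide),
      Function.update_of_ne (show (4:Fin 6) ≠ 3 by decide),
      Function.update_of_ne (show (5:Fin 6) ≠ 3 by decide)]
    erw [HasDerivAt.deriv
      ((((hd_sq (x 2) (x 3)).add_const _).sub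
          (((hasDerivAt_id' (x 3)).const_mul (x 0)).mul_const (x 5))).const_mul (1/2)
        |>.add_const _)]
    ring
  have p4H0 : pderiv6 4 (H₀ F) x = x 4 / (x 0)^2 := by
    unfold pderiv6 H₀
    simp only [Function.update_self,
      Function.update_of_ne (show (0:Fin 6) ≠ 4 by decide),
      Function.update_of_ne (show (1:Fin 6) ≠ 4 by decide),
      Function.update_of_ne (show (3:Fin 6) ≠ 4 by decide),
      Function.update_of_ne (show (5:Fin 6) ≠ 4 by decide)]
    erw [HasDerivAt.deriv
      ((((hasDerivAt_const (x 4) ((x 3)^2)).add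
          ((hasDerivAt_pow 2 (x 4)).div_const ((x 0)^2))).add_const _).const_mul (1/2)
        |>.add_const _)]
    push_cast
    ring
  have p4H4 : pderiv6 4 (H₄ F) x = x 2 * x 4 / (x 0)^2 := by
    unfold pderiv6 H₄
    simp only [Function.update_self,
      Function.update_of_ne (show (0:Fin 6) ≠ 4 by decide),
      Function.update_of_ne (show (1:Fin 6) ≠ 4 by decide),
      Function.update_of_ne (show (2:Fin 6) ≠ 4 by decide),
      Function.update_of_ne (show (3:Fin 6) ≠ 4 by decide),
      Function.update_of_ne (show (5:Fin 6) ≠ 4 by decide)]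
    erw [HasDerivAt.deriv
      ((((hasDerivAt_const (x 4) (x 2 * (x 3)^2)).add
          (hd_sq (x 2 / (x 0)^2) (x 4))).sub_const _).const_mul (1/2) |>.add_const _)]
    field_simp
    ring
  have p5H0 : pderiv6 5 (H₀ F) x = x 5 := by
    unfold pderiv6 H₀
    simp only [Function.update_self,
      Function.update_of_ne (show (0:Fin 6) ≠ 5 by decide),
      Function.update_of_ne (show (1:Fin 6) ≠ 5 by decide),
      Function.update_of_ne (show (3:Fin 6) ≠ 5 by decide),
      Function.update_of_ne (show (4:Fin 6) ≠ 5 by decide)]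
    erw [HasDerivAt.deriv
      (((hasDerivAt_const (x 5) _).add (hasDerivAt_pow 2 (x 5))).const_mul (1/2)
        |>.add_const _)]
    push_cast
    ring
  have p5H4 : pderiv6 5 (H₄ F) x = -(1/2)*(x 0)*(x 3) := by
    unfold pderiv6 H₄
    simp only [Function.update_self,
      Function.update_of_ne (show (0:Fin 6) ≠ 5 by decide),
      Function.update_of_ne (show (1:Fin 6) ≠ 5 by decide),
      Function.update_of_ne (show (2:Fin 6) ≠ 5 by decide),
      Function.update_of_ne (show (3:Fin 6) ≠ 5 by decide),
      Function.update_of_ne (show (4:Fin 6) ≠ 5 by decide)]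
    erw [HasDerivAt.deriv
      (((hasDerivAt_const (x 5) _).sub (hd_lin (x 0 * x 3) (x 5))).const_mul (1/2)
        |>.add_const _)]
    ring
  unfold poisson6
  rw [p0H0, p0H4, p1H0, p1H4, p2H0, p2H4, p3H0, p3H4, p4H0, p4H4, p5H0, p5H4]
  field_simp
  ring
end

section
/- Suppose λμ = 1, G is smooth with G' not identically zero, and the three conditions λμ = 1, μG'' + λG = 0, and 2λFG − μF'G' = 0 hold with λ ≠ 0. Then G(ψ) = c·cos(λψ + ψ₀) for some constants c ≠ 0, ψ₀, and on any interval where G ≠ 0, F(ψ) = k/sin²(λψ + ψ₀) for some constant k. -/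
open Real


lemma sin_lin_hasDerivAt (l c ψ₀ : ℝ) (ψ : ℝ) :
    HasDerivAt (fun ψ => c * Real.sin (l * ψ + ψ₀)) (c * Real.cos (l * ψ + ψ₀) * l) ψ := by
  have h1 : HasDerivAt (fun ψ : ℝ => l * ψ + ψ₀) l ψ := by
    simpa using ((hasDerivAt_id ψ).const_mul l).add_const ψ₀
  simpa [mul_assoc] using ((Real.hasDerivAt_sin (l * ψ + ψ₀)).comp ψ h1).const_mul c

lemma cos_lin_hasDerivAt (l c ψ₀ : ℝ) (ψ : ℝ) :
    HasDerivAt (fun ψ => c * Real.cos (l * ψ + ψ₀)) (-(c * Real.sin (l * ψ + ψ₀) * l)) ψ := by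
  have h1 : HasDerivAt (fun ψ : ℝ => l * ψ + ψ₀) l ψ := by
    simpa using ((hasDerivAt_id ψ).const_mul l).add_const ψ₀
  have := ((Real.hasDerivAt_cos (l * ψ + ψ₀)).comp ψ h1).const_mul c
  simpa [mul_assoc] using this.congr_deriv (by ring)

lemma ode_cos_aux (l : ℝ) (hl : l ≠ 0) (G : ℝ → ℝ)
    (hG1 : Differentiable ℝ G) (hG2 : Differentiable ℝ (deriv G))
    (hGpp : ∀ ψ, deriv (deriv G) ψ = -(l^2) * G ψ) :
    ∀ ψ, G ψ = G 0 * Real.cos (l*ψ) + (deriv G 0 / l) * Real.sin (l*ψ) := by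
  set A := G 0 with hA
  set B := deriv G 0 / l with hB
  set h : ℝ → ℝ := fun ψ => G ψ - (A * Real.cos (l*ψ) + B * Real.sin (l*ψ)) with hh_def
  set h1 : ℝ → ℝ := fun ψ => deriv G ψ - (-(A * Real.sin (l*ψ) * l) + B * Real.cos (l*ψ) * l) with hh1_def
  have hg : ∀ ψ, HasDerivAt (fun ψ => A * Real.cos (l*ψ) + B * Real.sin (l*ψ))
      (-(A * Real.sin (l*ψ) * l) + B * Real.cos (l*ψ) * l) ψ := by
    intro ψ
    have := (cos_lin_hasDerivAt l A 0 ψ).add (sin_lin_hasDerivAt l B 0 ψ)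
    simpa [Pi.add_def] using this
  have hg' : ∀ ψ, HasDerivAt (fun ψ => -(A * Real.sin (l*ψ) * l) + B * Real.cos (l*ψ) * l)
      (-(A * Real.cos (l*ψ) * l * l) + -(B * Real.sin (l*ψ) * l) * l) ψ := by
    intro ψ
    have hs := ((sin_lin_hasDerivAt l A 0 ψ).const_mul l).neg
    have hc := (cos_lin_hasDerivAt l B 0 ψ).const_mul l
    have := hs.add hc
    refine HasDerivAt.congr_deriv (this.congr_of_eventuallyEq ?_) (by ring)
    filter_upwards with x; simp only [Pi.add_apply, Pi.neg_apply]; ring_nf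
  have hh : ∀ ψ, HasDerivAt h (h1 ψ) ψ := fun ψ => ((hG1 ψ).hasDerivAt).sub (hg ψ)
  have hh1 : ∀ ψ, HasDerivAt h1 (-(l^2) * h ψ) ψ := by
    intro ψ
    have := ((hG2 ψ).hasDerivAt).sub (hg' ψ)
    refine this.congr_deriv ?_
    rw [hGpp]; simp only [hh_def]; ring
  set E : ℝ → ℝ := fun ψ => (h1 ψ)^2 + l^2 * (h ψ)^2 with hE_def
  have hE : ∀ ψ, HasDerivAt E 0 ψ := by
    intro ψ
    have := ((hh1 ψ).pow 2).add (((hh ψ).pow 2).const_mul (l^2))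
    refine this.congr_deriv ?_
    push_cast; ring
  have hEc : ∀ ψ, E ψ = E 0 :=
    fun ψ => is_const_of_deriv_eq_zero (fun x => (hE x).differentiableAt)
      (fun x => (hE x).deriv) ψ 0
  have hE0 : E 0 = 0 := by
    have h0 : h 0 = 0 := by simp [hh_def, hA]
    have h10 : h1 0 = 0 := by
      simp only [hh1_def, mul_zero, Real.cos_zero, Real.sin_zero, mul_one, mul_zero]
      rw [hB]; field_simp; ring
    simp [hE_def, h0, h10]
  intro ψ
  have hψ : E ψ = 0 := (hEc ψ).trans hE0
  have hl2 : (0:ℝ) < l^2 := by positivity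
  have hx : l^2 * (h ψ)^2 = 0 := by
    simp only [hE_def] at hψ
    nlinarith [sq_nonneg (h1 ψ), mul_nonneg hl2.le (sq_nonneg (h ψ))]
  have : h ψ = 0 := by
    have := (mul_eq_zero.mp hx).resolve_left (by positivity)
    exact pow_eq_zero_iff (by norm_num) |>.mp this
  simp only [hh_def] at this
  linarith


/-- If `λμ = 1`, `λ ≠ 0`, `G'` is not identically zero, and the system
`μG'' + λG = 0`, `2λFG − μF'G' = 0` holds, then `G(ψ) = c·cos(λψ + ψ₀)` with `c ≠ 0`,
and on any interval where `G ≠ 0` one has `F(ψ) = k/sin²(λψ + ψ₀)` for some constant `k`. -/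
theorem ode_system_solution (l μ : ℝ) (hl : l ≠ 0) (hlm : l * μ = 1)
    (F G : ℝ → ℝ) (hF : ContDiff ℝ (⊤ : ℕ∞) F) (hG : ContDiff ℝ (⊤ : ℕ∞) G)
    (hG' : ∃ ψ, deriv G ψ ≠ 0)
    (h2 : ∀ ψ, μ * deriv (deriv G) ψ + l * G ψ = 0)
    (h3 : ∀ ψ, 2 * l * F ψ * G ψ - μ * deriv F ψ * deriv G ψ = 0) :
    ∃ c ψ₀ : ℝ, c ≠ 0 ∧ (∀ ψ, G ψ = c * cos (l * ψ + ψ₀)) ∧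
      ∀ a b : ℝ, (∀ ψ ∈ Set.Ioo a b, G ψ ≠ 0) →
        ∃ k : ℝ, ∀ ψ ∈ Set.Ioo a b, F ψ = k / (sin (l * ψ + ψ₀))^2 := by
  have hG1 : Differentiable ℝ G := hG.differentiable (by simp)
  have hG2 : Differentiable ℝ (deriv G) :=
    (contDiff_infty_iff_deriv.mp (hG.of_le (by simp))).2.differentiable (by simp)
  have hF1 : Differentiable ℝ F := hF.differentiable (by simp)
  have hGpp : ∀ ψ, deriv (deriv G) ψ = -(l^2) * G ψ := by
    intro ψ
    linear_combination l * h2 ψ - deriv (deriv G) ψ * hlm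
  set A := G 0 with hA
  set B := deriv G 0 / l with hB
  have hGf : ∀ ψ, G ψ = A * cos (l*ψ) + B * sin (l*ψ) :=
    ode_cos_aux l hl G hG1 hG2 hGpp
  -- A, B not both zero
  have hAB : A ≠ 0 ∨ B ≠ 0 := by
    by_contra hc
    push_neg at hc
    obtain ⟨hA0, hB0⟩ := hc
    have hG0 : G = fun _ => (0:ℝ) := funext fun ψ => by simp [hGf ψ, hA0, hB0]
    obtain ⟨ψ, hψ⟩ := hG'
    rw [hG0] at hψ
    simp at hψ
  have hABsq : (0:ℝ) < A^2 + B^2 := by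
    rcases hAB with h | h <;> positivity
  set c := Real.sqrt (A^2 + B^2) with hc_def
  have hc : c ≠ 0 := by positivity
  have hcsq : c^2 = A^2 + B^2 := Real.sq_sqrt hABsq.le
  set z : ℂ := ⟨A, -B⟩ with hz_def
  have hzne : z ≠ 0 := by
    intro h
    rw [Complex.ext_iff] at h
    simp only [Complex.zero_re, Complex.zero_im] at h
    rcases hAB with h' | h'
    · exact h' h.1
    · exact h' (neg_eq_zero.mp h.2)
  have habs : ‖z‖ = c := by
    rw [Complex.norm_def, Complex.normSq_apply, hc_def, hz_def]
    norm_num; ring_nf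
  set ψ₀ := z.arg with hψ₀
  have hcos : Real.cos ψ₀ = A / c := by
    rw [hψ₀, Complex.cos_arg hzne, habs]
  have hsin : Real.sin ψ₀ = -B / c := by
    rw [hψ₀, Complex.sin_arg, habs]
  have hGc : ∀ ψ, G ψ = c * cos (l * ψ + ψ₀) := by
    intro ψ
    rw [hGf ψ, Real.cos_add, hcos, hsin]
    field_simp
    ring
  refine ⟨c, ψ₀, hc, hGc, ?_⟩
  intro a b hGne
  have hderivG : ∀ ψ, deriv G ψ = -(c * sin (l * ψ + ψ₀) * l) := by
    intro ψ
    have hGeq : G = fun ψ => c * cos (l * ψ + ψ₀) := funext hGc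
    rw [hGeq]
    exact (cos_lin_hasDerivAt l c ψ₀ ψ).deriv
  have key : ∀ ψ, deriv F ψ * sin (l * ψ + ψ₀) + 2 * l * F ψ * cos (l * ψ + ψ₀) = 0 := by
    intro ψ
    have h := h3 ψ
    rw [hGc ψ, hderivG ψ] at h
    have key0 : c * (deriv F ψ * sin (l * ψ + ψ₀) + 2 * l * F ψ * cos (l * ψ + ψ₀)) = 0 := by
      linear_combination h - c * deriv F ψ * sin (l * ψ + ψ₀) * hlm
    exact (mul_eq_zero.mp key0).resolve_left hc
  set H : ℝ → ℝ := fun ψ => F ψ * (sin (l * ψ + ψ₀))^2 with hH_def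
  have hH : ∀ ψ, HasDerivAt H 0 ψ := by
    intro ψ
    have hs : HasDerivAt (fun ψ => Real.sin (l * ψ + ψ₀)) (cos (l * ψ + ψ₀) * l) ψ := by
      simpa using sin_lin_hasDerivAt l 1 ψ₀ ψ
    have := (hF1 ψ).hasDerivAt.mul (hs.pow 2)
    refine this.congr_deriv ?_
    push_cast
    simp only [Pi.pow_apply]
    linear_combination sin (l * ψ + ψ₀) * key ψ
  have hHc : ∀ ψ, H ψ = H a :=
    fun ψ => is_const_of_deriv_eq_zero (fun x => (hH x).differentiableAt)
      (fun x => (hH x).deriv) ψ a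
  refine ⟨F a * (sin (l * a + ψ₀))^2, ?_⟩
  intro ψ hψ
  have hHψ : F ψ * (sin (l * ψ + ψ₀))^2 = F a * (sin (l * a + ψ₀))^2 := hHc ψ
  by_cases hs0 : sin (l * ψ + ψ₀) = 0
  · have hcos0 : cos (l * ψ + ψ₀) ≠ 0 := by
      intro h0
      exact hGne ψ hψ (by rw [hGc ψ, h0, mul_zero])
    have hF0 : F ψ = 0 := by
      have hk := key ψ
      rw [hs0] at hk
      have h2 : (2 * l * cos (l * ψ + ψ₀)) * F ψ = 0 := by linarith [hk]
      exact (mul_eq_zero.mp h2).resolve_left (by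
        intro h0
        rcases mul_eq_zero.mp h0 with h0 | h0
        · rcases mul_eq_zero.mp h0 with h0 | h0
          · norm_num at h0
          · exact hl h0
        · exact hcos0 h0)
    have hk0 : F a * (sin (l * a + ψ₀))^2 = 0 := by
      rw [← hHψ, hs0]; ring
    rw [hF0, hk0, hs0]
    norm_num
  · rw [eq_div_iff (pow_ne_zero 2 hs0)]
    exact hHψ
end
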